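/- arXiv:1711.11353 — 5 statements merged into one kernel-verified Lean document; each statement's English description precedes it below -/
import Mathlib

section
/- Main Lemma: Let Y be a D-box of X, i.e., a box obtained from X by a finite sequence of steps, each of which removes from the current box one strategy of one player that is dominated (modulo the current box) by another strategy remaining in that player's current strategy set. Then for every player i and every strategy x_i ∈ X_i, there exists a strategy y_i ∈ Y_i such that y_i dominates x_i modulo Y. -/
/-- `a` dominates `b` (strategies of player `i`) modulo the box `Y`. -/
def DominatesMod {I : Type*} {X : I → Type*} (u : I → (∀ j, X j) → ℝ)
    (Y : ∀ j, Set (X j)) (i : I) (a b : X i) : Prop :=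
  ∀ x x' : ∀ j, X j, (∀ j, j ≠ i → x j = x' j ∧ x j ∈ Y j) →
    x i = a → x' i = b → u i x' ≤ u i x

/-- One elimination step: remove from `Y i` a strategy `b` dominated modulo `Y`
by some other strategy `a` remaining in `Y i`. -/
def ElimStep {I : Type*} {X : I → Type*} (u : I → (∀ j, X j) → ℝ)
    (Y Z : ∀ j, Set (X j)) : Prop :=
  ∃ (i : I) (a b : X i), a ∈ Y i ∧ b ∈ Y i ∧ a ≠ b ∧ DominatesMod u Y i a b ∧
    Z i = Y i \ {b} ∧ ∀ j, j ≠ i → Z j = Y j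

/-- `Y` is a D-box of `X`: obtained from the full box by finitely many elimination steps. -/
def DBox {I : Type*} {X : I → Type*} (u : I → (∀ j, X j) → ℝ)
    (Y : ∀ j, Set (X j)) : Prop :=
  Relation.ReflTransGen (ElimStep u) (fun j => (Set.univ : Set (X j))) Y

lemma dominatesMod_mono {I : Type*} {X : I → Type*} (u : I → (∀ j, X j) → ℝ)
    {Y Z : ∀ j, Set (X j)} (hZY : ∀ j, Z j ⊆ Y j) {i : I} {a b : X i}
    (h : DominatesMod u Y i a b) : DominatesMod u Z i a b :=
  fun x x' hx => h x x' (fun j hj => ⟨(hx j hj).1, hZY j (hx j hj).2⟩)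

lemma dominatesMod_trans {I : Type*} [DecidableEq I] {X : I → Type*}
    (u : I → (∀ j, X j) → ℝ) {Y : ∀ j, Set (X j)} {i : I} {a b c : X i}
    (hab : DominatesMod u Y i a b) (hbc : DominatesMod u Y i b c) :
    DominatesMod u Y i a c := by
  intro x x' hx hxa hxc
  set x'' := Function.update x i b with hx''
  have h1 : u i x'' ≤ u i x := by
    refine hab x x'' (fun j hj => ⟨?_, (hx j hj).2⟩) hxa (Function.update_self i b x)
    rw [hx'', Function.update_of_ne hj]
  have h2 : u i x' ≤ u i x'' := by
    refine hbc x'' x' (fun j hj => ?_) (Function.update_self i b x)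
      hxc
    rw [hx'', Function.update_of_ne hj]
    exact hx j hj
  exact h2.trans h1

lemma main_aux {I : Type*} {X : I → Type*}
    (u : I → (∀ j, X j) → ℝ) (Y : ∀ j, Set (X j))
    (hY : DBox u Y) : ∀ (i : I) (xi : X i), ∃ yi ∈ Y i, DominatesMod u Y i yi xi := by
  classical
  induction hY with
  | refl =>
    intro i xi
    refine ⟨xi, Set.mem_univ xi, fun x x' hx hxa hxb => ?_⟩
    have : x = x' := by
      funext j
      by_cases hj : j = i
      · subst hj; rw [hxa, hxb]
      · exact (hx j hj).1
    rw [this]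
  | @tail W Z _ hstep ih =>
    intro i xi
    obtain ⟨i0, a, b, ha, hb, hab, hdom, hZi, hZj⟩ := hstep
    have hZY : ∀ j, Z j ⊆ W j := by
      intro j
      by_cases hj : j = i0
      · subst hj; rw [hZi]; exact Set.diff_subset
      · rw [hZj j hj]
    obtain ⟨y, hy, hydom⟩ := ih i xi
    by_cases hi : i = i0
    · subst hi
      by_cases hyb : y = b
      · subst hyb
        have : DominatesMod u W i a xi := dominatesMod_trans u hdom hydom
        refine ⟨a, ?_, dominatesMod_mono u hZY this⟩
        rw [hZi]; exact ⟨ha, hab⟩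
      · refine ⟨y, ?_, dominatesMod_mono u hZY hydom⟩
        rw [hZi]; exact ⟨hy, hyb⟩
    · refine ⟨y, ?_, dominatesMod_mono u hZY hydom⟩
      rw [hZj i hi]; exact hy

/-- Main Lemma: for any D-box `Y` and any strategy `x_i ∈ X_i`, some `y_i ∈ Y_i`
dominates `x_i` modulo `Y`. -/
theorem main_lemma {I : Type*} [Fintype I] {X : I → Type*}
    [∀ i, Fintype (X i)] [∀ i, Nonempty (X i)]
    (u : I → (∀ j, X j) → ℝ) (Y : ∀ j, Set (X j))
    (hY : DBox u Y) (i : I) (xi : X i) :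
    ∃ yi ∈ Y i, DominatesMod u Y i yi xi :=
  main_aux u Y hY i xi
end

section
/- Any domination equilibrium is a Nash equilibrium: if a D-box of X consists of a single strategy profile y = (y_1, ..., y_n), then y is a Nash equilibrium of the game (X, u), i.e., for every player i and every strategy x_i ∈ X_i, u(i, y) ≥ u(i, (y with i-th coordinate replaced by x_i)). -/
/-- Any domination equilibrium is a Nash equilibrium: if a D-box consists of a
single strategy profile `y`, then `y` is a Nash equilibrium of the game. -/
theorem domination_equilibrium_is_nash {I : Type*} [Fintype I] [DecidableEq I]
    {X : I → Type*} [∀ i, Fintype (X i)] [∀ i, Nonempty (X i)]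
    (u : I → (∀ j, X j) → ℝ) (Y : ∀ j, Set (X j)) (y : ∀ j, X j)
    (hY : DBox u Y) (hsingle : ∀ j, Y j = {y j}) :
    ∀ (i : I) (xi : X i), u i (Function.update y i xi) ≤ u i y := by
  -- Invariant along the elimination process.
  suffices h : ∀ (i : I) (xi : X i) (z : ∀ j, X j), (∀ j, z j ∈ Y j) →
      ∃ xi' ∈ Y i, u i (Function.update z i xi) ≤ u i (Function.update z i xi') by
    intro i xi
    obtain ⟨xi', hmem, hle⟩ := h i xi y (fun j => by rw [hsingle j]; rfl)
    rw [hsingle i] at hmem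
    have : Function.update y i xi' = y := by
      funext j
      rcases eq_or_ne j i with rfl | hj
      · simpa [Function.update] using hmem
      · simp [Function.update, hj]
    rwa [this] at hle
  clear hsingle
  induction hY with
  | refl =>
    intro i xi z _
    exact ⟨xi, Set.mem_univ _, le_refl _⟩
  | tail _ step ih =>
    rename_i B C _
    obtain ⟨i0, a, b, haB, hbB, hab, hdom, hCi, hCj⟩ := step
    have hsub : ∀ j, C j ⊆ B j := by
      intro j
      rcases eq_or_ne j i0 with rfl | hj
      · rw [hCi]; exact Set.diff_subset
      · rw [hCj j hj]
    intro i xi z hz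
    obtain ⟨xi', hmem, hle⟩ := ih i xi z (fun j => hsub j (hz j))
    by_cases hC : xi' ∈ C i
    · exact ⟨xi', hC, hle⟩
    · -- xi' was eliminated: so i = i0 and xi' = b, dominated by a ∈ C i
      rcases eq_or_ne i i0 with rfl | hi
      · have hxb : xi' = b := by
          by_contra hne
          exact hC (by rw [hCi]; exact ⟨hmem, hne⟩)
        subst hxb
        refine ⟨a, by rw [hCi]; exact ⟨haB, hab⟩, hle.trans ?_⟩
        refine hdom (Function.update z i a) (Function.update z i xi') ?_
          (Function.update_self ..) (Function.update_self ..)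
        intro j hj
        refine ⟨by simp [Function.update, hj], ?_⟩
        simp only [Function.update, dif_neg hj]
        exact hsub j (hz j)
      · exact absurd (by rw [hCj i hi]; exact hmem) hC
end

section
/- Every two-person zero-sum game in which every 2×2 submatrix has a saddle point itself has a saddle point (Shapley's theorem). Formally: let u : X_1 × X_2 → ℝ be a payoff matrix on finite nonempty strategy sets. If for all x_1, x'_1 ∈ X_1 and x_2, x'_2 ∈ X_2 the 2×2 restriction of u to {x_1, x'_1} × {x_2, x'_2} has a saddle point, then u has a saddle point on X_1 × X_2. -/
/-- `(y₁, y₂)` is a saddle point of `u` on `S₁ × S₂`: the row player (maximizer)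
cannot improve in the column and the column player (minimizer) cannot improve
in the row. -/
def SaddlePoint {X₁ X₂ : Type*} (u : X₁ → X₂ → ℝ)
    (S₁ : Set X₁) (S₂ : Set X₂) (y₁ : X₁) (y₂ : X₂) : Prop :=
  y₁ ∈ S₁ ∧ y₂ ∈ S₂ ∧ (∀ z₁ ∈ S₁, u z₁ y₂ ≤ u y₁ y₂) ∧ (∀ z₂ ∈ S₂, u y₁ y₂ ≤ u y₁ z₂)

/-- Shapley's theorem: if every `2 × 2` submatrix of `u` has a saddle point,
then `u` has a saddle point. -/
theorem shapley {X₁ X₂ : Type*} [Fintype X₁] [Fintype X₂]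
    [Nonempty X₁] [Nonempty X₂] (u : X₁ → X₂ → ℝ)
    (h2x2 : ∀ (x₁ x₁' : X₁) (x₂ x₂' : X₂),
      ∃ y₁ y₂, SaddlePoint u {x₁, x₁'} {x₂, x₂'} y₁ y₂) :
    ∃ y₁ y₂, SaddlePoint u Set.univ Set.univ y₁ y₂ := by
  classical
  -- for each row, an argmin column
  have hc : ∀ i : X₁, ∃ j : X₂, ∀ j', u i j ≤ u i j' := by
    intro i
    obtain ⟨j, -, hj⟩ := Finset.exists_min_image Finset.univ (u i)
      ⟨Classical.arbitrary X₂, Finset.mem_univ _⟩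
    exact ⟨j, fun j' => hj j' (Finset.mem_univ _)⟩
  choose c hcmin using hc
  -- for each column, an argmax row
  have hrr : ∀ j : X₂, ∃ i : X₁, ∀ i', u i' j ≤ u i j := by
    intro j
    obtain ⟨i, -, hi⟩ := Finset.exists_max_image Finset.univ (fun i => u i j)
      ⟨Classical.arbitrary X₁, Finset.mem_univ _⟩
    exact ⟨i, fun i' => hi i' (Finset.mem_univ _)⟩
  choose r hrmax using hrr
  -- maximin row and minimax column
  obtain ⟨iS, -, hiS⟩ := Finset.exists_max_image Finset.univ (fun i => u i (c i))
    ⟨Classical.arbitrary X₁, Finset.mem_univ _⟩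
  obtain ⟨jS, -, hjS⟩ := Finset.exists_min_image Finset.univ (fun j => u (r j) j)
    ⟨Classical.arbitrary X₂, Finset.mem_univ _⟩
  set v1 := u iS (c iS) with hv1
  set v2 := u (r jS) jS with hv2
  have hv1' : ∀ i, u i (c i) ≤ v1 := fun i => hiS i (Finset.mem_univ _)
  have hv2' : ∀ j, v2 ≤ u (r j) j := fun j => hjS j (Finset.mem_univ _)
  by_cases hv : v2 ≤ v1
  · -- (iS, jS) is a saddle point
    refine ⟨iS, jS, trivial, trivial, ?_, ?_⟩
    · intro z _
      have h1 : u z jS ≤ v2 := hrmax jS z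
      have h2 : v1 ≤ u iS jS := hcmin iS jS
      linarith
    · intro z _
      have h1 : u iS jS ≤ v2 := hrmax jS iS
      have h2 : v1 ≤ u iS z := hcmin iS z
      linarith
  push_neg at hv
  exfalso
  -- key 2×2 lemma
  have key : ∀ (i i' : X₁) (j j' : X₂), u i j ≤ v1 → v2 ≤ u i' j → u i' j' ≤ v1 →
      u i j' ≤ v1 := by
    intro i i' j j' hA hB hC
    obtain ⟨y₁, y₂, hy₁, hy₂, hcol, hrow⟩ := h2x2 i i' j j'
    have hi : y₁ = i ∨ y₁ = i' := hy₁
    have hj : y₂ = j ∨ y₂ = j' := hy₂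
    rcases hi with rfl | rfl <;> rcases hj with rfl | rfl
    · -- (i, j): column condition contradicts v1 < v2
      have := hcol i' (Or.inr rfl)
      linarith
    · -- (i, j'): row condition gives the bound
      have := hrow j (Or.inl rfl)
      linarith
    · -- (i', j): row condition contradicts v1 < v2
      have := hrow j' (Or.inr rfl)
      linarith
    · -- (i', j'): column condition gives the bound
      have := hcol i (Or.inl rfl)
      linarith
  set φ : X₁ → X₁ := fun i => r (c i) with hφ
  -- find a periodic point of φ
  obtain ⟨a, b, hne, heq⟩ :=
    Finite.exists_ne_map_eq_of_infinite (fun n : ℕ => φ^[n] (Classical.arbitrary X₁))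
  have hper : ∃ (i₀ : X₁) (k : ℕ), 0 < k ∧ φ^[k] i₀ = i₀ := by
    rcases lt_or_gt_of_ne hne with h | h
    · exact ⟨φ^[a] (Classical.arbitrary X₁), b - a, Nat.sub_pos_of_lt h, by
        rw [← Function.iterate_add_apply, Nat.sub_add_cancel h.le]; exact heq.symm⟩
    · exact ⟨φ^[b] (Classical.arbitrary X₁), a - b, Nat.sub_pos_of_lt h, by
        rw [← Function.iterate_add_apply, Nat.sub_add_cancel h.le]; exact heq⟩
  obtain ⟨i₀, k, hk, hpk⟩ := hper
  -- the main invariant along the orbit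
  have main : ∀ t, u i₀ (c (φ^[t] i₀)) ≤ v1 := by
    intro t
    induction t with
    | zero => simpa using hv1' i₀
    | succ t ih =>
      have hstep : φ^[t + 1] i₀ = r (c (φ^[t] i₀)) := by
        rw [Function.iterate_succ_apply']
      refine key i₀ (φ^[t + 1] i₀) (c (φ^[t] i₀)) (c (φ^[t + 1] i₀)) ih ?_ ?_
      · rw [hstep]; exact hv2' (c (φ^[t] i₀))
      · exact hv1' _
  -- contradiction at the periodic return
  obtain ⟨k', rfl⟩ : ∃ k', k = k' + 1 := ⟨k - 1, (Nat.succ_pred_eq_of_pos hk).symm⟩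
  have h1 : u i₀ (c (φ^[k'] i₀)) ≤ v1 := main k'
  have h2 : v2 ≤ u i₀ (c (φ^[k'] i₀)) := by
    have hstep : φ^[k' + 1] i₀ = r (c (φ^[k'] i₀)) := by
      rw [Function.iterate_succ_apply']
    have := hv2' (c (φ^[k'] i₀))
    rw [← hstep, hpk] at this
    exact this
  linarith
end

section
/- Every finite n-person game in extensive form with perfect information on a rooted tree has a Nash equilibrium in pure strategies (backward induction / Zermelo–Kuhn–Gale). Formally: for a finite rooted tree where each internal node is controlled by one of n players and each leaf carries a payoff vector in ℝ^n, there exists a pure strategy profile (an assignment, for each player, of a chosen child to each node that player controls) that is a Nash equilibrium: no player can strictly increase their payoff at the leaf reached from the root by unilaterally changing their own strategy. -/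
/-- A finite rooted tree for an `n`-person game with perfect information:
leaves carry payoff vectors, internal nodes are controlled by a player and have
a nonempty (finite) family of children. -/
inductive GameTree (n : ℕ) : Type
  | leaf : (Fin n → ℝ) → GameTree n
  | node : Fin n → (k : ℕ) → (Fin (k + 1) → GameTree n) → GameTree n

/-- A pure strategy profile on a game tree: a choice of a child at every
internal node. -/
inductive Profile (n : ℕ) : GameTree n → Type
  | leaf (pay : Fin n → ℝ) : Profile n (.leaf pay)
  | node (p : Fin n) (k : ℕ) (c : Fin (k + 1) → GameTree n)
      (choice : Fin (k + 1)) (sub : ∀ j, Profile n (c j)) :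
      Profile n (.node p k c)

/-- The payoff vector at the leaf reached from the root under a profile. -/
def payoff {n : ℕ} : {t : GameTree n} → Profile n t → (Fin n → ℝ)
  | _, .leaf pay => pay
  | _, .node _ _ _ choice sub => payoff (sub choice)

/-- Two profiles agree off player `i`: they make the same choices at every node
not controlled by `i` (a unilateral deviation of player `i`). -/
def AgreeOff {n : ℕ} (i : Fin n) :
    {t : GameTree n} → Profile n t → Profile n t → Prop
  | _, .leaf _, .leaf _ => True
  | _, .node p _ _ ch sub, .node _ _ _ ch' sub' =>
      (p ≠ i → ch = ch') ∧ ∀ j, AgreeOff i (sub j) (sub' j)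

/-- Backward induction (Zermelo–Kuhn–Gale): every finite `n`-person game with
perfect information on a rooted tree has a pure-strategy Nash equilibrium. -/
theorem exists_pure_nash {n : ℕ} (t : GameTree n) :
    ∃ s : Profile n t, ∀ (i : Fin n) (s' : Profile n t),
      AgreeOff i s s' → payoff s' i ≤ payoff s i := by
  induction t with
  | leaf pay =>
    refine ⟨.leaf pay, fun i s' _ => ?_⟩
    cases s'
    exact le_refl _
  | node p k c ih =>
    choose sub hsub using ih
    obtain ⟨ch, hch⟩ := Finite.exists_max (fun j : Fin (k + 1) => payoff (sub j) p)
    refine ⟨.node p k c ch sub, fun i s' hag => ?_⟩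
    cases s' with
    | node _ _ _ ch' sub' =>
      obtain ⟨h1, h2⟩ := hag
      show payoff (sub' ch') i ≤ payoff (sub ch) i
      by_cases hip : p = i
      · subst hip
        exact le_trans (hsub ch' p (sub' ch') (h2 ch')) (hch ch')
      · rw [← h1 hip]
        exact hsub ch i (sub' ch) (h2 ch)
end

section
/- Uniqueness of domination equilibrium outcome under the outcome condition: assume u satisfies that for all profiles x, x', if u(i', x) = u(i', x') for some player i' then u(i, x) = u(i, x') for all i. If Y and Z are two D-boxes of X each consisting of a single strategy profile y and z respectively, and both are terminal (domination-free), then u(i, y) = u(i, z) for every player i. -/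
/-- A D-box is terminal if no further elimination step is possible. -/
def Terminal {I : Type*} {X : I → Type*} (u : I → (∀ j, X j) → ℝ)
    (Y : ∀ j, Set (X j)) : Prop :=
  ¬ ∃ Z : ∀ j, Set (X j), ElimStep u Y Z

set_option linter.unusedSectionVars false

section Aux
variable {I : Type*} {X : I → Type*} (u : I → (∀ j, X j) → ℝ)

lemma dominates_mono {Y Y' : ∀ j, Set (X j)} (h : ∀ j, Y' j ⊆ Y j) {i : I} {a b : X i}
    (hd : DominatesMod u Y i a b) : DominatesMod u Y' i a b :=
  fun x x' hx => hd x x' (fun j hj => ⟨(hx j hj).1, h j (hx j hj).2⟩)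

lemma dominates_trans {Y : ∀ j, Set (X j)} {i : I} {a b c : X i}
    (hab : DominatesMod u Y i a b) (hbc : DominatesMod u Y i b c) :
    DominatesMod u Y i a c := by
  classical
  intro x x' hx hxa hx'c
  set x'' := Function.update x i b with hx''
  have h1 : u i x' ≤ u i x'' := by
    refine hbc x'' x' (fun j hj => ?_) (Function.update_self _ _ _) hx'c
    rw [hx'', Function.update_of_ne hj]
    exact hx j hj
  have h2 : u i x'' ≤ u i x := by
    refine hab x x'' (fun j hj => ?_) hxa (Function.update_self _ _ _)
    rw [hx'', Function.update_of_ne hj]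
    exact ⟨rfl, (hx j hj).2⟩
  linarith

lemma elim_subset {Y Z : ∀ j, Set (X j)} (h : ElimStep u Y Z) : ∀ j, Z j ⊆ Y j := by
  obtain ⟨i, a, b, _, _, _, _, hZi, hZ⟩ := h
  intro j
  by_cases hj : j = i
  · subst hj; rw [hZi]; exact Set.diff_subset
  · rw [hZ j hj]

lemma reduce_subset {Y Z : ∀ j, Set (X j)}
    (h : Relation.ReflTransGen (ElimStep u) Y Z) : ∀ j, Z j ⊆ Y j := by
  induction h with
  | refl => exact fun j => le_refl _
  | tail _ hstep ih => exact fun j => (elim_subset u hstep j).trans (ih j)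

lemma singleton_no_elim {Y : ∀ j, Set (X j)} {y : ∀ j, X j} (hY : ∀ j, Y j = {y j})
    {Z : ∀ j, Set (X j)} : ¬ ElimStep u Y Z := by
  rintro ⟨i, a, b, ha, hb, hab, -⟩
  rw [hY i, Set.mem_singleton_iff] at ha hb
  exact hab (ha.trans hb.symm)

lemma singleton_reduce {Y Z : ∀ j, Set (X j)} {y : ∀ j, X j} (hY : ∀ j, Y j = {y j})
    (h : Relation.ReflTransGen (ElimStep u) Y Z) : Z = Y := by
  rcases h.cases_head with rfl | ⟨c, hc, -⟩
  · rfl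
  · exact absurd hc (singleton_no_elim u hY)

end Aux

section Swap
variable {I : Type*} [DecidableEq I] {X : I → Type*} (u : I → (∀ j, X j) → ℝ)
variable {i : I} [DecidableEq (X i)] (b d : X i)

/-- swap `b` and `d` in `X i`. -/
def swf : X i → X i := fun t => if t = b then d else if t = d then b else t

variable {b d}

lemma swf_b : swf b d b = d := if_pos rfl

lemma swf_d (hbd : b ≠ d) : swf b d d = b := by
  simp [swf, hbd, Ne.symm hbd]

lemma swf_other {t : X i} (h1 : t ≠ b) (h2 : t ≠ d) : swf b d t = t := by
  simp [swf, h1, h2]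

lemma swf_invol (hbd : b ≠ d) (t : X i) : swf b d (swf b d t) = t := by
  unfold swf
  split_ifs with h1 h2 <;> simp_all [swf]

lemma swf_mem {S : Set (X i)} (hb : b ∈ S) (hd : d ∈ S) {t : X i} (ht : t ∈ S) :
    swf b d t ∈ S := by
  unfold swf; split_ifs <;> assumption

variable (b d)

/-- swap box: apply `swf` preimage at coordinate `i`. -/
def swapBox (W : ∀ j, Set (X j)) : ∀ j, Set (X j) :=
  Function.update W i (swf b d ⁻¹' W i)

/-- swap profile. -/
def swProf (x : ∀ j, X j) : ∀ j, X j := Function.update x i (swf b d (x i))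

variable {b d}

lemma swapBox_same (W : ∀ j, Set (X j)) : swapBox b d W i = swf b d ⁻¹' W i :=
  Function.update_self _ _ _

lemma swapBox_noteq {j : I} (h : j ≠ i) (W : ∀ j, Set (X j)) : swapBox b d W j = W j :=
  Function.update_of_ne h _ _

lemma swProf_same (x : ∀ j, X j) : swProf b d x i = swf b d (x i) :=
  Function.update_self _ _ _

lemma swProf_noteq {j : I} (h : j ≠ i) (x : ∀ j, X j) : swProf b d x j = x j :=
  Function.update_of_ne h _ _

variable {W : ∀ j, Set (X j)}

lemma swProf_payoff (hbd : b ≠ d)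
    (hswap : ∀ x : ∀ j, X j, (∀ j, j ≠ i → x j ∈ W j) →
      ∀ m, u m (Function.update x i b) = u m (Function.update x i d))
    (x : ∀ j, X j) (hx : ∀ j, j ≠ i → x j ∈ W j) (m : I) :
    u m (swProf b d x) = u m x := by
  by_cases h1 : x i = b
  · have hx' : x = Function.update x i b := by rw [← h1, Function.update_eq_self]
    have : swProf b d x = Function.update x i d := by
      unfold swProf; rw [h1, swf_b]
    rw [this, ← hswap x hx m, ← hx']
  · by_cases h2 : x i = d
    · have hx' : x = Function.update x i d := by rw [← h2, Function.update_eq_self]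
      have : swProf b d x = Function.update x i b := by
        unfold swProf; rw [h2, swf_d hbd]
      rw [this, hswap x hx m, ← hx']
    · have : swProf b d x = x := by
        unfold swProf; rw [swf_other h1 h2, Function.update_eq_self]
      rw [this]

end Swap

section Transport
set_option linter.unusedSectionVars false
variable {I : Type*} [DecidableEq I] {X : I → Type*} (u : I → (∀ j, X j) → ℝ)
variable {i : I} [DecidableEq (X i)] {b d : X i} {W : ∀ j, Set (X j)}

lemma elim_swap (hbd : b ≠ d) (hbW : b ∈ W i) (hdW : d ∈ W i)
    (hswap : ∀ x : ∀ j, X j, (∀ j, j ≠ i → x j ∈ W j) →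
      ∀ m, u m (Function.update x i b) = u m (Function.update x i d))
    {M M2 : ∀ j, Set (X j)} (hMW : ∀ j, M j ⊆ W j) (h : ElimStep u M M2) :
    ElimStep u (swapBox b d M) (swapBox b d M2) := by
  obtain ⟨k, p, q, hp, hq, hpq, hdom, hM2k, hM2o⟩ := h
  by_cases hk : k = i
  · subst hk
    refine ⟨k, swf b d p, swf b d q, ?_, ?_, ?_, ?_, ?_, ?_⟩
    · rw [swapBox_same]
      exact Set.mem_preimage.mpr (by rw [swf_invol hbd]; exact hp)
    · rw [swapBox_same]
      exact Set.mem_preimage.mpr (by rw [swf_invol hbd]; exact hq)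
    · intro hEq
      apply hpq
      have := congrArg (swf b d) hEq
      rwa [swf_invol hbd, swf_invol hbd] at this
    · intro x x' hx hxk hx'k
      set y := swProf b d x with hy
      set y' := swProf b d x' with hy'
      have hyoff : ∀ j, j ≠ k → y j = y' j ∧ y j ∈ M j := by
        intro j hj
        have hxx := hx j hj
        rw [swapBox_noteq hj] at hxx
        rw [hy, hy', swProf_noteq hj, swProf_noteq hj]
        exact hxx
      have hyi : y k = p := by rw [hy, swProf_same, hxk, swf_invol hbd]
      have hy'i : y' k = q := by rw [hy', swProf_same, hx'k, swf_invol hbd]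
      have hoffW : ∀ j, j ≠ k → x j ∈ W j := by
        intro j hj
        have hxx := (hx j hj).2
        rw [swapBox_noteq hj] at hxx
        exact hMW j hxx
      have hoffW' : ∀ j, j ≠ k → x' j ∈ W j := by
        intro j hj
        rw [← (hx j hj).1]
        exact hoffW j hj
      have e1 : u k y = u k x := swProf_payoff u hbd hswap x hoffW k
      have e2 : u k y' = u k x' := swProf_payoff u hbd hswap x' hoffW' k
      have := hdom y y' hyoff hyi hy'i
      linarith
    · rw [swapBox_same, swapBox_same, hM2k]
      ext t
      simp only [Set.mem_preimage, Set.mem_diff, Set.mem_singleton_iff]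
      constructor
      · rintro ⟨h1, h2⟩
        refine ⟨h1, fun hEq => h2 ?_⟩
        rw [hEq, swf_invol hbd]
      · rintro ⟨h1, h2⟩
        refine ⟨h1, fun hEq => h2 ?_⟩
        rw [← hEq, swf_invol hbd]
    · intro j hj
      rw [swapBox_noteq hj, swapBox_noteq hj, hM2o j hj]
  · refine ⟨k, p, q, ?_, ?_, hpq, ?_, ?_, ?_⟩
    · rwa [swapBox_noteq hk]
    · rwa [swapBox_noteq hk]
    · intro x x' hx hxk hx'k
      set y := swProf b d x with hy
      set y' := swProf b d x' with hy'
      have hyoff : ∀ j, j ≠ k → y j = y' j ∧ y j ∈ M j := by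
        intro j hj
        have hxx := hx j hj
        by_cases hji : j = i
        · subst hji
          rw [swapBox_same] at hxx
          rw [hy, hy', swProf_same, swProf_same]
          exact ⟨by rw [hxx.1], hxx.2⟩
        · rw [swapBox_noteq hji] at hxx
          rw [hy, hy', swProf_noteq hji, swProf_noteq hji]
          exact hxx
      have hyi : y k = p := by rw [hy, swProf_noteq hk, hxk]
      have hy'i : y' k = q := by rw [hy', swProf_noteq hk, hx'k]
      have hoffW : ∀ j, j ≠ i → x j ∈ W j := by
        intro j hj
        by_cases hjk : j = k
        · subst hjk; rw [hxk]; exact hMW j hp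
        · have hxx := (hx j hjk).2
          rw [swapBox_noteq hj] at hxx
          exact hMW j hxx
      have hoffW' : ∀ j, j ≠ i → x' j ∈ W j := by
        intro j hj
        by_cases hjk : j = k
        · subst hjk; rw [hx'k]; exact hMW j hq
        · rw [← (hx j hjk).1]
          exact hoffW j hj
      have e1 : u k y = u k x := swProf_payoff u hbd hswap x hoffW k
      have e2 : u k y' = u k x' := swProf_payoff u hbd hswap x' hoffW' k
      have := hdom y y' hyoff hyi hy'i
      linarith
    · rw [swapBox_noteq hk, swapBox_noteq hk, hM2k]
    · intro j hj
      by_cases hji : j = i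
      · subst hji
        rw [swapBox_same, swapBox_same, hM2o j hj]
      · rw [swapBox_noteq hji, swapBox_noteq hji, hM2o j hj]

lemma reduce_swap (hbd : b ≠ d) (hbW : b ∈ W i) (hdW : d ∈ W i)
    (hswap : ∀ x : ∀ j, X j, (∀ j, j ≠ i → x j ∈ W j) →
      ∀ m, u m (Function.update x i b) = u m (Function.update x i d))
    {M S : ∀ j, Set (X j)} (hMW : ∀ j, M j ⊆ W j)
    (h : Relation.ReflTransGen (ElimStep u) M S) :
    Relation.ReflTransGen (ElimStep u) (swapBox b d M) (swapBox b d S) := by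
  induction h with
  | refl => exact Relation.ReflTransGen.refl
  | @tail V V2 hMV hstep ih =>
    refine ih.tail (elim_swap u hbd hbW hdW hswap ?_ hstep)
    exact fun j => (reduce_subset u hMV j).trans (hMW j)

end Transport

section Main
variable {I : Type*} [DecidableEq I] {X : I → Type*} [∀ j, DecidableEq (X j)]
variable (u : I → (∀ j, X j) → ℝ)

lemma box_subset_of_eqs {W W' : ∀ j, Set (X j)} {i : I} {b : X i}
    (hW'i : W' i = W i \ {b}) (hW'o : ∀ j, j ≠ i → W' j = W j) :
    ∀ j, W' j ⊆ W j := by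
  intro j
  by_cases hj : j = i
  · subst hj; rw [hW'i]; exact Set.diff_subset
  · rw [hW'o j hj]

lemma diamond_same_coord {W W' W1 : ∀ j, Set (X j)} {i : I} {b d : X i}
    (hW'i : W' i = W i \ {b}) (hW'o : ∀ j, j ≠ i → W' j = W j)
    (hW1i : W1 i = W i \ {d}) (hW1o : ∀ j, j ≠ i → W1 j = W j)
    (hbd : b ≠ d) (hbW : b ∈ W i) (hdW : d ∈ W i)
    {c' a' : X i} (hc'W : c' ∈ W i) (hc'b : c' ≠ b) (hc'd : c' ≠ d)
    (hdomc : DominatesMod u W i c' d)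
    (ha'W : a' ∈ W i) (ha'd : a' ≠ d) (ha'b : a' ≠ b)
    (hdoma : DominatesMod u W i a' b) :
    ∃ V, ElimStep u W' V ∧ ElimStep u W1 V := by
  refine ⟨Function.update W' i (W' i \ {d}), ⟨i, c', d, ?_, ?_, hc'd, ?_, ?_, ?_⟩,
    ⟨i, a', b, ?_, ?_, ha'b, ?_, ?_, ?_⟩⟩
  · rw [hW'i]; exact ⟨hc'W, hc'b⟩
  · rw [hW'i]; exact ⟨hdW, Ne.symm hbd⟩
  · exact dominates_mono u (box_subset_of_eqs hW'i hW'o) hdomc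
  · exact Function.update_self _ _ _
  · intro j hj; exact Function.update_of_ne hj _ _
  · rw [hW1i]; exact ⟨ha'W, ha'd⟩
  · rw [hW1i]; exact ⟨hbW, hbd⟩
  · exact dominates_mono u (box_subset_of_eqs hW1i hW1o) hdoma
  · rw [Function.update_self, hW'i, hW1i]
    exact Set.diff_diff_comm
  · intro j hj
    rw [Function.update_of_ne hj, hW'o j hj, hW1o j hj]

lemma main_lemma_s19
    (outcome : ∀ x x' : ∀ j, X j, (∃ i', u i' x = u i' x') → ∀ i, u i x = u i x')
    {W : ∀ j, Set (X j)} {s : ∀ j, X j}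
    (h : Relation.ReflTransGen (ElimStep u) W (fun j => ({s j} : Set (X j)))) :
    ∀ W1, ElimStep u W W1 →
      ∃ s', Relation.ReflTransGen (ElimStep u) W1 (fun j => ({s' j} : Set (X j))) ∧
        ∀ m, u m s' = u m s := by
  induction h using Relation.ReflTransGen.head_induction_on with
  | refl =>
    intro W1 hstep
    exact absurd hstep (singleton_no_elim u (fun j => rfl))
  | @head W W' e rest ih =>
    intro W1 e1
    obtain ⟨i, a, b, haW, hbW, hab, hdom, hW'i, hW'o⟩ := e
    obtain ⟨k, c, d, hcW, hdW, hcd, hdom1, hW1k, hW1o⟩ := e1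
    by_cases hki : k = i
    · subst hki
      -- now everything lives at coordinate k
      by_cases hdb : d = b
      · have hW1W' : W1 = W' := by
          funext j
          by_cases hj : j = k
          · subst hj; rw [hW1k, hW'i, hdb]
          · rw [hW1o j hj, hW'o j hj]
        exact ⟨s, hW1W' ▸ rest, fun m => rfl⟩
      · have hbd : b ≠ d := fun h => hdb h.symm
        by_cases hcb : c = b
        · by_cases had : a = d
          · -- swap case : b and d weakly dominate each other
            have hdomdb : DominatesMod u W k d b := had ▸ hdom
            have hdombd : DominatesMod u W k b d := hcb ▸ hdom1
            have hswap : ∀ x : ∀ j, X j, (∀ j, j ≠ k → x j ∈ W j) →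
                ∀ m, u m (Function.update x k b) = u m (Function.update x k d) := by
              intro x hx
              have haux : ∀ j, j ≠ k → Function.update x k d j = Function.update x k b j ∧
                  Function.update x k d j ∈ W j := by
                intro j hj
                rw [Function.update_of_ne hj, Function.update_of_ne hj]
                exact ⟨rfl, hx j hj⟩
              have haux' : ∀ j, j ≠ k → Function.update x k b j = Function.update x k d j ∧
                  Function.update x k b j ∈ W j := by
                intro j hj
                rw [Function.update_of_ne hj, Function.update_of_ne hj]
                exact ⟨rfl, hx j hj⟩
              have h1 : u k (Function.update x k b) ≤ u k (Function.update x k d) :=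
                hdomdb _ _ haux (Function.update_self _ _ _) (Function.update_self _ _ _)
              have h2 : u k (Function.update x k d) ≤ u k (Function.update x k b) :=
                hdombd _ _ haux' (Function.update_self _ _ _) (Function.update_self _ _ _)
              exact outcome _ _ ⟨k, le_antisymm h1 h2⟩
            have hW1 : W1 = swapBox b d W' := by
              funext j
              by_cases hj : j = k
              · subst hj
                rw [hW1k, swapBox_same, hW'i]
                ext t
                simp only [Set.mem_diff, Set.mem_singleton_iff, Set.mem_preimage]
                constructor
                · rintro ⟨h1, h2⟩
                  refine ⟨swf_mem hbW hdW h1, fun hEq => h2 ?_⟩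
                  have := congrArg (swf b d) hEq
                  rwa [swf_invol hbd, swf_b] at this
                · rintro ⟨h1, h2⟩
                  have ht : t = swf b d (swf b d t) := (swf_invol hbd t).symm
                  refine ⟨ht ▸ swf_mem hbW hdW h1, fun hEq => h2 ?_⟩
                  rw [hEq, swf_d hbd]
              · rw [hW1o j hj, swapBox_noteq hj, hW'o j hj]
            have hW'W : ∀ j, W' j ⊆ W j := box_subset_of_eqs hW'i hW'o
            have hred := reduce_swap u hbd hbW hdW hswap hW'W rest
            have hsing : swapBox b d (fun j => ({s j} : Set (X j))) =
                fun j => ({swProf b d s j} : Set (X j)) := by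
              funext j
              by_cases hj : j = k
              · subst hj
                rw [swapBox_same, swProf_same]
                ext t
                simp only [Set.mem_preimage, Set.mem_singleton_iff]
                constructor
                · intro ht
                  rw [← ht, swf_invol hbd]
                · intro ht
                  rw [ht, swf_invol hbd]
              · rw [swapBox_noteq hj, swProf_noteq hj]
            rw [hsing] at hred
            rw [hW1]
            have hsW : ∀ j, j ≠ k → s j ∈ W j := by
              intro j hj
              have hmem : s j ∈ (fun j => ({s j} : Set (X j))) j := rfl
              exact hW'W j (reduce_subset u rest j hmem)
            exact ⟨swProf b d s, hred, swProf_payoff u hbd hswap s hsW⟩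
          · -- c = b, a ≠ d : use a for both eliminations
            have hdomad : DominatesMod u W k a d :=
              dominates_trans u hdom (hcb ▸ hdom1)
            obtain ⟨V, eV', eV1⟩ := diamond_same_coord u hW'i hW'o hW1k hW1o hbd hbW hdW
              haW hab had hdomad haW had hab hdom
            obtain ⟨t, htr, hts⟩ := ih V eV'
            exact ⟨t, htr.head eV1, hts⟩
        · by_cases had : a = d
          · -- a = d, c ≠ b : use c for both eliminations
            have hdomcb : DominatesMod u W k c b :=
              dominates_trans u hdom1 (had ▸ hdom)
            obtain ⟨V, eV', eV1⟩ := diamond_same_coord u hW'i hW'o hW1k hW1o hbd hbW hdW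
              hcW hcb hcd hdom1 hcW hcd hcb hdomcb
            obtain ⟨t, htr, hts⟩ := ih V eV'
            exact ⟨t, htr.head eV1, hts⟩
          · -- generic same-coordinate case
            obtain ⟨V, eV', eV1⟩ := diamond_same_coord u hW'i hW'o hW1k hW1o hbd hbW hdW
              hcW hcb hcd hdom1 haW had hab hdom
            obtain ⟨t, htr, hts⟩ := ih V eV'
            exact ⟨t, htr.head eV1, hts⟩
    · -- different coordinates
      have hik : i ≠ k := fun h => hki h.symm
      have hW'W : ∀ j, W' j ⊆ W j := box_subset_of_eqs hW'i hW'o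
      have hW1W : ∀ j, W1 j ⊆ W j := by
        intro j
        by_cases hj : j = k
        · subst hj; rw [hW1k]; exact Set.diff_subset
        · rw [hW1o j hj]
      have eV' : ElimStep u W' (Function.update W' k (W' k \ {d})) := by
        refine ⟨k, c, d, ?_, ?_, hcd, dominates_mono u hW'W hdom1,
          Function.update_self _ _ _, fun j hj => Function.update_of_ne hj _ _⟩
        · rw [hW'o k hki]; exact hcW
        · rw [hW'o k hki]; exact hdW
      have eV1 : ElimStep u W1 (Function.update W' k (W' k \ {d})) := by
        refine ⟨i, a, b, ?_, ?_, hab, dominates_mono u hW1W hdom, ?_, ?_⟩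
        · rw [hW1o i hik]; exact haW
        · rw [hW1o i hik]; exact hbW
        · rw [Function.update_of_ne hik, hW'i, hW1o i hik]
        · intro j hj
          by_cases hjk : j = k
          · subst hjk
            rw [Function.update_self, hW'o j hki, hW1k]
          · rw [Function.update_of_ne hjk, hW'o j hj, hW1o j hjk]
      obtain ⟨t, htr, hts⟩ := ih _ eV'
      exact ⟨t, htr.head eV1, hts⟩

end Main

theorem de_outcome_unique' {I : Type*} [Fintype I] {X : I → Type*}
    [∀ i, Fintype (X i)] [∀ i, Nonempty (X i)]
    (u : I → (∀ j, X j) → ℝ)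
    (outcome : ∀ x x' : ∀ j, X j, (∃ i', u i' x = u i' x') → ∀ i, u i x = u i x')
    (Y Z : ∀ j, Set (X j)) (y z : ∀ j, X j)
    (hY : Relation.ReflTransGen (ElimStep u) (fun j => (Set.univ : Set (X j))) Y)
    (hZ : Relation.ReflTransGen (ElimStep u) (fun j => (Set.univ : Set (X j))) Z)
    (hYy : ∀ j, Y j = {y j}) (hZz : ∀ j, Z j = {z j}) :
    ∀ i, u i y = u i z := by
  classical
  have key : ∀ {A B : ∀ j, Set (X j)}, Relation.ReflTransGen (ElimStep u) A B →
      (∃ s, Relation.ReflTransGen (ElimStep u) A (fun j => ({s j} : Set (X j))) ∧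
        ∀ m, u m s = u m y) →
      (∃ s, Relation.ReflTransGen (ElimStep u) B (fun j => ({s j} : Set (X j))) ∧
        ∀ m, u m s = u m y) := by
    intro A B h
    induction h with
    | refl => exact id
    | @tail C B hAC hstep ih =>
      intro hA
      obtain ⟨s, hsred, hsy⟩ := ih hA
      obtain ⟨s', hs'red, hs's⟩ := main_lemma_s19 u outcome hsred B hstep
      exact ⟨s', hs'red, fun m => (hs's m).trans (hsy m)⟩
  have hYsing : Y = fun j => ({y j} : Set (X j)) := funext hYy
  have init : ∃ s, Relation.ReflTransGen (ElimStep u)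
      (fun j => (Set.univ : Set (X j))) (fun j => ({s j} : Set (X j))) ∧
      ∀ m, u m s = u m y :=
    ⟨y, hYsing ▸ hY, fun m => rfl⟩
  obtain ⟨s, hsred, hsy⟩ := key hZ init
  have hZsing : (fun j => ({s j} : Set (X j))) = Z := singleton_reduce u hZz hsred
  have hsz : s = z := by
    funext j
    have : ({s j} : Set (X j)) = {z j} := by rw [← hZz j, ← hZsing]
    exact Set.singleton_eq_singleton_iff.mp this
  intro i
  rw [← hsz]
  exact (hsy i).symm

/-- Uniqueness of the domination-equilibrium outcome under the outcome condition. -/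
theorem de_outcome_unique {I : Type*} [Fintype I] {X : I → Type*}
    [∀ i, Fintype (X i)] [∀ i, Nonempty (X i)]
    (u : I → (∀ j, X j) → ℝ)
    (outcome : ∀ x x' : ∀ j, X j, (∃ i', u i' x = u i' x') → ∀ i, u i x = u i x')
    (Y Z : ∀ j, Set (X j)) (y z : ∀ j, X j)
    (hY : DBox u Y) (hZ : DBox u Z)
    (hYy : ∀ j, Y j = {y j}) (hZz : ∀ j, Z j = {z j})
    (hYt : Terminal u Y) (hZt : Terminal u Z) :
    ∀ i, u i y = u i z :=
  de_outcome_unique' u outcome Y Z y z hY hZ hYy hZz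
end
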